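/- Assume 0 < σ < 1 and 2σ+1 < δ_u < 3. Then there exists a constant C, depending only on L, σ, δ_u and C_B, such that whenever Λ_u < ∞ one has (c ν)² · max(Λ_u − 1, 0)^{1+δ_u} ≤ C · Σ_{q≥−1} λ_q^{−1+δ_u} a_q². -/

import Mathlib

open scoped ENNReal

/-- The admissibility condition at level `q` in the definition of the abstract velocity
determining wavenumber (`λ_q = 2^q`): `(L λ_{p-q})^σ λ_q^{-1} a_p < c ν` for every
integer `p > q`, and `λ_q^{-2} G_q < c ν`. -/
def GoodU (L c ν σ : ℝ) (a G : ℤ → ℝ) (q : ℕ) : Prop :=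
  (∀ p : ℤ, (q : ℤ) < p →
      (L * (2:ℝ) ^ (p - (q : ℤ))) ^ σ * ((2:ℝ) ^ (q : ℤ))⁻¹ * a p < c * ν) ∧
    (((2:ℝ) ^ (q : ℤ)) ^ 2)⁻¹ * G q < c * ν

/-- The abstract velocity determining wavenumber `Λ_u = λ_Q = 2^Q`, where `Q` is the
least admissible natural number; `Λ_u = ∞` if no natural number is admissible. -/
noncomputable def LambdaU (L c ν σ : ℝ) (a G : ℤ → ℝ) : ℝ≥0∞ :=
  sInf {x : ℝ≥0∞ | ∃ q : ℕ, GoodU L c ν σ a G q ∧ x = 2 ^ q}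

open Finset

/-!
Let `Q` be the least admissible level, so that `Λ_u = 2^Q`; for `Q = 0` the left side vanishes.
Otherwise level `m = Q - 1` is not admissible, in one of two ways. If
`(L λ_{p-m})^σ λ_m⁻¹ a_p ≥ cν` for some `p > m`, squaring gives
`(cν)² Λ_u^{1+δ} ≤ L^{2σ} 2^{2+2σ} λ_p^{δ-1} a_p²`, since the exponents of `2` differ by
`(p - m - 1)(δ - 1 - 2σ) ≥ 0`. If `λ_m⁻² G_m ≥ cν`, the Bernstein bound and Cauchy–Schwarz with
weights `λ_p^{3-δ}`, whose sum over `p ≤ m` is geometric and `≲ λ_m^{3-δ}` because `δ < 3`, give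
`(cν)² Λ_u^{1+δ} ≲ C_B² Σ_{p ≤ m} λ_p^{δ-1} a_p²`.
-/

lemma two_zpow_rpow (k : ℤ) (x : ℝ) : ((2:ℝ) ^ k) ^ x = (2:ℝ) ^ ((k : ℝ) * x) := by
  rw [← Real.rpow_intCast, ← Real.rpow_mul zero_le_two]

lemma sum_Icc_zpow_le_of_one_lt {r : ℝ} (hr : 1 < r) (k m : ℤ) :
    ∑ p ∈ Icc k m, r ^ p ≤ r ^ m * (1 - r⁻¹)⁻¹ := by
  have hr0 : 0 < r := one_pos.trans hr
  have hK : 0 < 1 - r⁻¹ := sub_pos.2 (inv_lt_one_of_one_lt₀ hr)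
  rcases lt_or_ge m k with hmk | hkm
  · rw [Icc_eq_empty_of_lt hmk, sum_empty]
    positivity
  induction m, hkm using Int.leInduction with
  | base =>
    rw [Icc_self, sum_singleton]
    exact le_mul_of_one_le_right (zpow_pos hr0 k).le (one_le_inv₀ hK |>.2 (by simp [hr0.le]))
  | succ m hkm ih =>
    rw [← insert_Icc_right_eq_Icc_add_one (by omega), sum_insert (by simp), zpow_add_one₀ hr0.ne']
    calc r ^ m * r + ∑ p ∈ Icc k m, r ^ p ≤ r ^ m * r + r ^ m * (1 - r⁻¹)⁻¹ := by gcongr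
      _ = r ^ m * r * (1 - r⁻¹)⁻¹ := by
        have : r - 1 ≠ 0 := by linarith
        field_simp
        ring

lemma sum_Icc_two_zpow_rpow_le {β : ℝ} (hβ : 0 < β) (k m : ℤ) :
    ∑ p ∈ Icc k m, ((2:ℝ) ^ p) ^ β ≤ ((2:ℝ) ^ m) ^ β * (1 - (2:ℝ) ^ (-β))⁻¹ := by
  have h := sum_Icc_zpow_le_of_one_lt (Real.one_lt_rpow one_lt_two hβ) k m
  simp only [← Real.rpow_intCast, ← Real.rpow_mul zero_le_two, mul_comm _ β] at h ⊢
  rwa [Real.rpow_neg zero_le_two]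

lemma sq_sum_two_zpow_mul_le (δ : ℝ) (a : ℤ → ℝ) (s : Finset ℤ) :
    (∑ p ∈ s, (2:ℝ) ^ p * a p) ^ 2 ≤
      (∑ p ∈ s, ((2:ℝ) ^ p) ^ (3 - δ)) * ∑ p ∈ s, ((2:ℝ) ^ p) ^ (-1 + δ) * a p ^ 2 := by
  refine sum_sq_le_sum_mul_sum_of_sq_le_mul s (fun p _ => by positivity)
    (fun p _ => by positivity) fun p _ => le_of_eq ?_
  have h2p : (0:ℝ) < 2 ^ p := zpow_pos two_pos p
  rw [← mul_assoc, ← Real.rpow_add h2p, show 3 - δ + (-1 + δ) = (2 : ℕ) by norm_num,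
    Real.rpow_natCast, mul_pow]

lemma sq_mul_rpow_le_of_le_high_mode {L σ δ b x : ℝ} {m p : ℤ} (hL : 0 ≤ L)
    (hδ : 2 * σ + 1 ≤ δ) (hmp : m < p) (hb : 0 ≤ b)
    (h : b ≤ (L * (2:ℝ) ^ (p - m)) ^ σ * ((2:ℝ) ^ m)⁻¹ * x) :
    b ^ 2 * ((2:ℝ) ^ (m + 1)) ^ (1 + δ) ≤
      (L ^ σ) ^ 2 * (2:ℝ) ^ (2 + 2 * σ) * (((2:ℝ) ^ p) ^ (-1 + δ) * x ^ 2) := by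
  set e : ℝ := (p - m) * σ - m
  have h' : b ≤ L ^ σ * x * (2:ℝ) ^ e := by
    refine h.trans_eq ?_
    rw [Real.mul_rpow hL (zpow_pos two_pos _).le, ← Real.rpow_neg_one, two_zpow_rpow,
      two_zpow_rpow, show e = ((p - m : ℤ) : ℝ) * σ + m * -1 by push_cast; ring,
      Real.rpow_add two_pos]
    ring
  have hexp : e * (2 : ℕ) + (m + 1) * (1 + δ) ≤ 2 + 2 * σ + p * (-1 + δ) := by
    have hmp' : (m : ℝ) + 1 ≤ p := by exact_mod_cast hmp
    simp only [e, Nat.cast_ofNat]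
    nlinarith [mul_nonneg (sub_nonneg.2 hmp') (sub_nonneg.2 hδ)]
  calc b ^ 2 * ((2:ℝ) ^ (m + 1)) ^ (1 + δ)
      ≤ (L ^ σ * x * (2:ℝ) ^ e) ^ 2 * (2:ℝ) ^ ((m + 1) * (1 + δ)) := by
        rw [two_zpow_rpow]; push_cast; gcongr
    _ = (L ^ σ) ^ 2 * x ^ 2 * (2:ℝ) ^ (e * (2 : ℕ) + (m + 1) * (1 + δ)) := by
        rw [Real.rpow_add two_pos, Real.rpow_mul_natCast zero_le_two]; ring
    _ ≤ (L ^ σ) ^ 2 * x ^ 2 * (2:ℝ) ^ (2 + 2 * σ + p * (-1 + δ)) := by gcongr; norm_num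
    _ = (L ^ σ) ^ 2 * (2:ℝ) ^ (2 + 2 * σ) * (((2:ℝ) ^ p) ^ (-1 + δ) * x ^ 2) := by
        rw [Real.rpow_add two_pos, two_zpow_rpow]; ring

lemma sq_mul_rpow_le_of_le_gradient {δ b CB : ℝ} {a : ℤ → ℝ} {k m : ℤ} (hδ : δ < 3)
    (hb : 0 ≤ b)
    (h : b ≤ (((2:ℝ) ^ m) ^ 2)⁻¹ * (CB * ∑ p ∈ Icc k m, (2:ℝ) ^ p * a p)) :
    b ^ 2 * ((2:ℝ) ^ (m + 1)) ^ (1 + δ) ≤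
      CB ^ 2 * (1 - (2:ℝ) ^ (δ - 3))⁻¹ * (2:ℝ) ^ (1 + δ) *
        ∑ p ∈ Icc k m, ((2:ℝ) ^ p) ^ (-1 + δ) * a p ^ 2 := by
  set l : ℝ := (2:ℝ) ^ m
  set K : ℝ := (1 - (2:ℝ) ^ (δ - 3))⁻¹
  set E := ∑ p ∈ Icc k m, ((2:ℝ) ^ p) ^ (-1 + δ) * a p ^ 2
  have hl : 0 < l := zpow_pos two_pos m
  have hE : 0 ≤ E := sum_nonneg fun p _ => by positivity
  have hgeom : ∑ p ∈ Icc k m, ((2:ℝ) ^ p) ^ (3 - δ) ≤ l ^ (3 - δ) * K := by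
    simpa only [neg_sub] using sum_Icc_two_zpow_rpow_le (sub_pos.2 hδ) k m
  have hscale : ((2:ℝ) ^ (m + 1)) ^ (1 + δ) = (2:ℝ) ^ (1 + δ) * l ^ (1 + δ) := by
    rw [zpow_add_one₀ two_ne_zero, mul_comm, Real.mul_rpow zero_le_two hl.le]
  have hl4 : l ^ (3 - δ) * l ^ (1 + δ) = l ^ 4 := by
    rw [← Real.rpow_add hl, show 3 - δ + (1 + δ) = (4 : ℕ) by norm_num, Real.rpow_natCast]
  calc b ^ 2 * ((2:ℝ) ^ (m + 1)) ^ (1 + δ)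
      ≤ ((l ^ 2)⁻¹ * (CB * ∑ p ∈ Icc k m, (2:ℝ) ^ p * a p)) ^ 2 *
          ((2:ℝ) ^ (m + 1)) ^ (1 + δ) := by
        gcongr
    _ = CB ^ 2 * ((l ^ 2)⁻¹) ^ 2 * ((2:ℝ) ^ (m + 1)) ^ (1 + δ) *
          (∑ p ∈ Icc k m, (2:ℝ) ^ p * a p) ^ 2 := by ring
    _ ≤ CB ^ 2 * ((l ^ 2)⁻¹) ^ 2 * ((2:ℝ) ^ (m + 1)) ^ (1 + δ) * (l ^ (3 - δ) * K * E) := by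
        gcongr
        exact (sq_sum_two_zpow_mul_le δ a _).trans (mul_le_mul_of_nonneg_right hgeom hE)
    _ = CB ^ 2 * K * (2:ℝ) ^ (1 + δ) * E * ((l ^ 2)⁻¹ ^ 2 * (l ^ (3 - δ) * l ^ (1 + δ))) := by
        rw [hscale]; ring
    _ = CB ^ 2 * K * (2:ℝ) ^ (1 + δ) * E := by
        rw [hl4]; field_simp

lemma sum_le_tsum_nat_sub_one (F : ℤ → ℝ≥0∞) {s : Finset ℤ} (hs : ∀ p ∈ s, -1 ≤ p) :
    ∑ p ∈ s, F p ≤ ∑' n : ℕ, F (n - 1) := by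
  calc ∑ p ∈ s, F p = ∑ p ∈ s, F (((p + 1).toNat : ℤ) - 1) :=
        sum_congr rfl fun p hp => by rw [show ((p + 1).toNat : ℤ) - 1 = p by have := hs p hp; omega]
    _ = ∑ n ∈ s.image fun p => (p + 1).toNat, F (n - 1) :=
        (sum_image (f := fun n : ℕ => F (n - 1)) fun p hp q hq hpq => by
          have := hs p hp; have := hs q hq; omega).symm
    _ ≤ ∑' n : ℕ, F (n - 1) := ENNReal.sum_le_tsum _

lemma ofReal_le_ofReal_mul_tsum_nat_sub_one {x C : ℝ} {t : ℤ → ℝ} {s : Finset ℤ}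
    (hs : ∀ p ∈ s, -1 ≤ p) (ht : ∀ p ∈ s, 0 ≤ t p) (hC : 0 ≤ C) (hx : x ≤ C * ∑ p ∈ s, t p) :
    ENNReal.ofReal x ≤ ENNReal.ofReal C * ∑' n : ℕ, ENNReal.ofReal (t (n - 1)) :=
  calc ENNReal.ofReal x ≤ ENNReal.ofReal (C * ∑ p ∈ s, t p) := ENNReal.ofReal_le_ofReal hx
    _ = ENNReal.ofReal C * ∑ p ∈ s, ENNReal.ofReal (t p) := by
        rw [ENNReal.ofReal_mul hC, ENNReal.ofReal_sum_of_nonneg ht]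
    _ ≤ ENNReal.ofReal C * ∑' n : ℕ, ENNReal.ofReal (t (n - 1)) := by
        gcongr
        exact sum_le_tsum_nat_sub_one (fun p => ENNReal.ofReal (t p)) hs

lemma exists_lambdaU_eq_two_pow {L c ν σ : ℝ} {a G : ℤ → ℝ} (h : LambdaU L c ν σ a G ≠ ⊤) :
    ∃ Q : ℕ, LambdaU L c ν σ a G = 2 ^ Q ∧ ∀ q < Q, ¬ GoodU L c ν σ a G q := by
  classical
  have hex : ∃ q, GoodU L c ν σ a G q := by
    by_contra! hno
    simp [LambdaU, hno] at h
  refine ⟨Nat.find hex, le_antisymm (sInf_le ⟨_, Nat.find_spec hex, rfl⟩) (le_sInf ?_),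
    fun q => Nat.find_min hex⟩
  rintro _ ⟨q, hq, rfl⟩
  exact pow_le_pow_right₀ one_le_two (Nat.find_min' hex hq)

noncomputable def wavenumberConst (L σ δ CB : ℝ) : ℝ :=
  (L ^ σ) ^ 2 * (2:ℝ) ^ (2 + 2 * σ) + CB ^ 2 * (1 - (2:ℝ) ^ (δ - 3))⁻¹ * (2:ℝ) ^ (1 + δ)

lemma wavenumberConst_pos {L σ δ CB : ℝ} (hL : 0 < L) (hδ : δ < 3) :
    0 < wavenumberConst L σ δ CB := by
  have hK : 0 < 1 - (2:ℝ) ^ (δ - 3) :=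
    sub_pos.2 (Real.rpow_lt_one_of_one_lt_of_neg one_lt_two (by linarith))
  have := Real.rpow_pos_of_pos hL σ
  unfold wavenumberConst
  positivity

lemma exists_sq_mul_rpow_le_of_not_goodU {L c ν σ δ CB : ℝ} {a G : ℤ → ℝ} {m : ℕ}
    (hL : 0 < L) (hδσ : 2 * σ + 1 ≤ δ) (hδ : δ < 3) (hcν : 0 ≤ c * ν)
    (hGB : ∀ q : ℤ, -1 ≤ q → G q ≤ CB * ∑ p ∈ Icc (-1 : ℤ) q, (2:ℝ) ^ p * a p)
    (hm : ¬ GoodU L c ν σ a G m) :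
    ∃ s : Finset ℤ, (∀ p ∈ s, -1 ≤ p) ∧
      (c * ν) ^ 2 * ((2:ℝ) ^ ((m : ℤ) + 1)) ^ (1 + δ) ≤
        wavenumberConst L σ δ CB * ∑ p ∈ s, ((2:ℝ) ^ p) ^ (-1 + δ) * a p ^ 2 := by
  have hK : 0 < 1 - (2:ℝ) ^ (δ - 3) :=
    sub_pos.2 (Real.rpow_lt_one_of_one_lt_of_neg one_lt_two (by linarith))
  have := Real.rpow_pos_of_pos hL σ
  simp only [GoodU, not_and_or, not_forall, not_lt] at hm
  rcases hm with ⟨p, hmp, hp⟩ | hgrad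
  · refine ⟨{p}, by simp; omega, ?_⟩
    calc _ ≤ (L ^ σ) ^ 2 * (2:ℝ) ^ (2 + 2 * σ) * (((2:ℝ) ^ p) ^ (-1 + δ) * a p ^ 2) :=
          sq_mul_rpow_le_of_le_high_mode hL.le hδσ hmp hcν hp
      _ ≤ _ := by
        rw [sum_singleton, wavenumberConst]
        gcongr
        exact le_add_of_nonneg_right (by positivity)
  · refine ⟨Icc (-1) m, fun p hp => (mem_Icc.1 hp).1, ?_⟩
    calc _ ≤ CB ^ 2 * (1 - (2:ℝ) ^ (δ - 3))⁻¹ * (2:ℝ) ^ (1 + δ) *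
            ∑ p ∈ Icc (-1) (m : ℤ), ((2:ℝ) ^ p) ^ (-1 + δ) * a p ^ 2 :=
          sq_mul_rpow_le_of_le_gradient hδ hcν
            (hgrad.trans (mul_le_mul_of_nonneg_left (hGB m (by omega)) (by positivity)))
      _ ≤ _ := by
        rw [wavenumberConst]
        gcongr
        exact le_add_of_nonneg_left (by positivity)

theorem pointwise_velocity_wavenumber_bound_general
    (L σ δu CB : ℝ) (hL : 1 ≤ L)
    (hσ0 : 0 < σ) (hδu1 : 2 * σ + 1 < δu) (hδu3 : δu < 3) :
    ∃ C : ℝ, 0 < C ∧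
      ∀ (c ν : ℝ) (a G : ℤ → ℝ), 0 < c → 0 < ν →
        (∀ q : ℤ, -1 ≤ q → 0 ≤ a q) →
        (∀ q : ℤ, -1 ≤ q → 0 ≤ G q) →
        (∀ q : ℤ, -1 ≤ q →
          G q ≤ CB * ∑ p ∈ Finset.Icc (-1 : ℤ) q, (2:ℝ) ^ p * a p) →
        LambdaU L c ν σ a G ≠ ⊤ →
        ENNReal.ofReal
            ((c * ν) ^ 2 * max ((LambdaU L c ν σ a G).toReal - 1) 0 ^ (1 + δu)) ≤
          ENNReal.ofReal C *
            ∑' n : ℕ,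
              ENNReal.ofReal
                (((2:ℝ) ^ ((n : ℤ) - 1)) ^ (-1 + δu) * a ((n : ℤ) - 1) ^ 2) := by
  have hL0 : 0 < L := one_pos.trans_le hL
  have hC := wavenumberConst_pos (σ := σ) (CB := CB) hL0 hδu3
  refine ⟨_, hC, fun c ν a G hc hν _ _ hGB hΛ => ?_⟩
  obtain ⟨Q, hQ, hmin⟩ := exists_lambdaU_eq_two_pow hΛ
  rw [hQ, ENNReal.toReal_pow, ENNReal.toReal_ofNat]
  rcases Q with _ | m
  · simp [Real.zero_rpow (by linarith : 0 < 1 + δu).ne']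
  obtain ⟨s, hs, hbound⟩ := exists_sq_mul_rpow_le_of_not_goodU hL0 hδu1.le hδu3
    (by positivity) hGB (hmin m m.lt_succ_self)
  refine ofReal_le_ofReal_mul_tsum_nat_sub_one hs (fun p _ => by positivity) hC.le
    (le_trans ?_ hbound)
  have h2m : (2:ℝ) ^ (m + 1) = (2:ℝ) ^ ((m : ℤ) + 1) := by norm_cast
  gcongr
  · linarith
  · exact max_le (by rw [← h2m]; linarith) (by positivity)

/-- pointwise bound on the velocity determining wavenumber. Assume
`0 < σ < 1` and `2σ+1 < δ_u < 3`. There is a constant `C` depending only on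
`L, σ, δ_u, C_B` such that whenever `Λ_u < ∞`,
`(cν)² max(Λ_u - 1, 0)^{1+δ_u} ≤ C Σ_{q ≥ -1} λ_q^{-1+δ_u} a_q²`. -/
theorem pointwise_velocity_wavenumber_bound
    (L σ δu CB : ℝ) (hL : 1 ≤ L) (hCB : 0 < CB)
    (hσ0 : 0 < σ) (hσ1 : σ < 1) (hδu1 : 2 * σ + 1 < δu) (hδu3 : δu < 3) :
    ∃ C : ℝ, 0 < C ∧
      ∀ (c ν : ℝ) (a G : ℤ → ℝ), 0 < c → 0 < ν →
        (∀ q : ℤ, -1 ≤ q → 0 ≤ a q) →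
        (∀ q : ℤ, -1 ≤ q → 0 ≤ G q) →
        (∀ q : ℤ, -1 ≤ q →
          G q ≤ CB * ∑ p ∈ Finset.Icc (-1 : ℤ) q, (2:ℝ) ^ p * a p) →
        LambdaU L c ν σ a G ≠ ⊤ →
        ENNReal.ofReal
            ((c * ν) ^ 2 * max ((LambdaU L c ν σ a G).toReal - 1) 0 ^ (1 + δu)) ≤
          ENNReal.ofReal C *
            ∑' n : ℕ,
              ENNReal.ofReal
                (((2:ℝ) ^ ((n : ℤ) - 1)) ^ (-1 + δu) * a ((n : ℤ) - 1) ^ 2) :=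
  pointwise_velocity_wavenumber_bound_general L σ δu CB hL hσ0 hδu1 hδu3
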